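/- arXiv:2006.13705 — 2 statements merged into one kernel-verified Lean document; each statement's English description precedes it below -/
import Mathlib

section
/- Let A be an abelian group, X : ℕ → Set_* a tower of pointed sets, m ≥ 2 an integer, h ∈ lim_ℕ(X∧A) and x₁,…,x_l ∈ lim_ℕ X. Suppose that for every n ∈ ℕ and every a ∈ X(n) with h(n)_a ≠ 0 and a ∉ {x₁(n),…,x_l(n)}, the element h(n)_a is divisible by m in A. Then the class [h] of h in H(X,A) is divisible by m, i.e., there exists g ∈ lim_ℕ(X∧A) with h − m·g in the image of ρ. -/
open CategoryTheory Finsupp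

universe u v w

/-- The smash product `Y ∧ A` of a pointed set `(Y, y0)` with an abelian group `A`:
the group of finitely supported functions `Y →₀ A` vanishing at the basepoint,
i.e. `⊕_{y ∈ Y∖{y0}} A`. -/
def Smash (Y : Type u) (y0 : Y) (A : Type v) [AddCommGroup A] :
    AddSubgroup (Y →₀ A) where
  carrier := {f | f y0 = 0}
  add_mem' := by
    intro a b ha hb
    simp only [Set.mem_setOf_eq, Finsupp.add_apply] at *
    rw [ha, hb, add_zero]
  zero_mem' := by simp
  neg_mem' := by
    intro a ha
    simp only [Set.mem_setOf_eq, Finsupp.neg_apply] at *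
    rw [ha, neg_zero]

theorem mem_smash {Y : Type u} {y0 : Y} {A : Type v} [AddCommGroup A] {f : Y →₀ A} :
    f ∈ Smash Y y0 A ↔ f y0 = 0 := Iff.rfl

/-- The pushforward homomorphism `g_* : Y∧A → Z∧A` induced by a (pointed) map
`g : Y → Z`: `(g_* f)(z) = ∑_{y : g y = z} f y` for `z ≠ z0`, and `(g_* f)(z0) = 0`. -/
noncomputable def smashMap {Y : Type u} {Z : Type v} (y0 : Y) (z0 : Z) (g : Y → Z)
    (A : Type w) [AddCommGroup A] :
    Smash Y y0 A →+ Smash Z z0 A where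
  toFun f := ⟨(Finsupp.mapDomain g f.1).erase z0, Finsupp.erase_same⟩
  map_zero' := by
    apply Subtype.ext
    simp
  map_add' f₁ f₂ := by
    apply Subtype.ext
    show (Finsupp.mapDomain g ((f₁ : Y →₀ A) + (f₂ : Y →₀ A))).erase z0 = _
    rw [Finsupp.mapDomain_add, Finsupp.erase_add]
    rfl

theorem smashMap_comp {Y : Type u} {Z : Type v} {W : Type w} (y0 : Y) (z0 : Z) (w0 : W)
    (g : Y → Z) (g' : Z → W) (hg' : g' z0 = w0)
    (A : Type*) [AddCommGroup A] (f : Smash Y y0 A) :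
    smashMap z0 w0 g' A (smashMap y0 z0 g A f) = smashMap y0 w0 (g' ∘ g) A f := by
  classical
  apply Subtype.ext
  show (Finsupp.mapDomain g' ((Finsupp.mapDomain g f.1).erase z0)).erase w0
      = (Finsupp.mapDomain (g' ∘ g) f.1).erase w0
  rw [Finsupp.mapDomain_comp]
  set h := Finsupp.mapDomain g f.1 with hh
  have key : Finsupp.mapDomain g' (h.erase z0)
      = Finsupp.mapDomain g' h - Finsupp.single w0 (h z0) := by
    have h1 : h.erase z0 = h - Finsupp.single z0 (h z0) := by
      ext a
      by_cases ha : a = z0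
      · subst ha; simp
      · simp [Finsupp.erase_ne ha, Finsupp.single_apply, Ne.symm ha, ha]
    rw [h1]
    have h2 := map_sub (Finsupp.mapDomain.addMonoidHom g') h (Finsupp.single z0 (h z0))
    simp only [Finsupp.mapDomain.addMonoidHom_apply] at h2
    rw [h2, Finsupp.mapDomain_single, hg']
  rw [key]
  ext a
  by_cases ha : a = w0
  · subst ha; simp
  · simp [Finsupp.erase_ne ha, Finsupp.single_apply, Ne.symm ha, ha]
/-- The inverse limit of a diagram of pointed sets, as a subset of the product. -/
def plim {D : Type u} [Category.{v} D] (F : D ⥤ Pointed.{w}) :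
    Set (∀ d : D, (F.obj d).X) :=
  {x | ∀ ⦃d d' : D⦄ (u : d ⟶ d'), (F.map u).toFun (x d) = x d'}

/-- The basepoint of the inverse limit of a diagram of pointed sets. -/
def plimPt {D : Type u} [Category.{v} D] (F : D ⥤ Pointed.{w}) : plim F :=
  ⟨fun d => (F.obj d).point, fun _ _ u => (F.map u).map_point⟩

/-- The inverse limit `lim_D (X ∧ A)` of the diagram of abelian groups obtained by
smashing a diagram of pointed sets with an abelian group `A`. -/
noncomputable def glim {D : Type u} [Category.{v} D] (F : D ⥤ Pointed.{w})
    (A : Type*) [AddCommGroup A] :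
    AddSubgroup (∀ d : D, Smash (F.obj d).X (F.obj d).point A) where
  carrier := {h | ∀ ⦃d d' : D⦄ (u : d ⟶ d'),
      smashMap (F.obj d).point (F.obj d').point (F.map u).toFun A (h d) = h d'}
  add_mem' := by
    intro a b ha hb d d' u
    rw [Pi.add_apply, map_add, ha u, hb u]
    rfl
  zero_mem' := by
    intro d d' u
    rw [Pi.zero_apply, map_zero]
    rfl
  neg_mem' := by
    intro a ha d d' u
    rw [Pi.neg_apply, map_neg, ha u]
    rfl

/-- The natural map `ρ : (lim_D X) ∧ A → lim_D (X ∧ A)`, whose component at `d`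
is induced by the projection `lim_D X → X d`. -/
noncomputable def rho {D : Type u} [Category.{v} D] (F : D ⥤ Pointed.{w})
    (A : Type*) [AddCommGroup A] :
    Smash (plim F) (plimPt F) A →+ glim F A where
  toFun f := ⟨fun d => smashMap (plimPt F) (F.obj d).point (fun x => x.1 d) A f, by
    intro d d' u
    rw [smashMap_comp (plimPt F) (F.obj d).point (F.obj d').point _ _ (F.map u).map_point A f]
    have : ((F.map u).toFun ∘ fun x : plim F => x.1 d) = fun x : plim F => x.1 d' := by
      funext x
      exact x.2 u
    rw [this]⟩
  map_zero' := by
    apply Subtype.ext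
    funext d
    show smashMap (plimPt F) (F.obj d).point (fun x => x.1 d) A 0 = (0 : Smash _ _ A)
    exact map_zero _
  map_add' f₁ f₂ := by
    apply Subtype.ext
    funext d
    show smashMap (plimPt F) (F.obj d).point (fun x => x.1 d) A (f₁ + f₂)
        = smashMap (plimPt F) (F.obj d).point (fun x => x.1 d) A f₁
          + smashMap (plimPt F) (F.obj d).point (fun x => x.1 d) A f₂
    exact map_add _ f₁ f₂

/-!
Choose `N` such that from stage `N` on the threads `xᵢ` and the base point are pairwise
distinct, and let `f ∈ (lim X) ∧ A` carry the value `h(N)(xᵢ(N))` at each `xᵢ`. Going from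
stage `K + 1` to stage `K`, the value of `h` on the thread `xᵢ` changes by values of `h(K + 1)`
at points off the threads, which are divisible by `m`; so every coordinate of `h - ρ f` is
divisible by `m`. Such an element of `lim (X ∧ A)` is `m • g`: divide it stage by stage,
correcting the division at stage `n + 1` by an `m`-torsion element lifting the discrepancy at
stage `n`. The lift exists because all supports involved stay among the images of points where
`h - ρ f` is nonzero at later stages, and each such image lifts one stage further.
-/

open Opposite Filter

section Smash

variable {Y Z : Type*} {A : Type*} [AddCommGroup A]

lemma smashMap_coe (y0 : Y) (z0 : Z) (g : Y → Z) (f : Smash Y y0 A) :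
    (smashMap y0 z0 g A f : Z →₀ A) = (mapDomain g (f : Y →₀ A)).erase z0 :=
  rfl

lemma smashMap_apply_of_ne {y0 : Y} {z0 : Z} (g : Y → Z) (f : Smash Y y0 A) {z : Z}
    (hz : z ≠ z0) : (smashMap y0 z0 g A f : Z →₀ A) z = mapDomain g (f : Y →₀ A) z := by
  rw [smashMap_coe, erase_ne hz]

lemma exists_ne_zero_of_smashMap_apply_ne_zero {y0 : Y} {z0 : Z} (g : Y → Z)
    (f : Smash Y y0 A) {z : Z} (hz : (smashMap y0 z0 g A f : Z →₀ A) z ≠ 0) :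
    ∃ y, (f : Y →₀ A) y ≠ 0 ∧ g y = z := by
  classical
  rw [← mem_support_iff, smashMap_coe, support_erase] at hz
  obtain ⟨y, hy, rfl⟩ := Finset.mem_image.1 (mapDomain_support (Finset.mem_of_mem_erase hz))
  exact ⟨y, mem_support_iff.1 hy, rfl⟩

lemma smashMap_congr {y0 : Y} {z0 : Z} {g g' : Y → Z} (f : Smash Y y0 A)
    (h : ∀ y, (f : Y →₀ A) y ≠ 0 → g y = g' y) :
    smashMap y0 z0 g A f = smashMap y0 z0 g' A f :=
  Subtype.ext <| by
    rw [smashMap_coe, smashMap_coe, mapDomain_congr fun y hy => h y (mem_support_iff.1 hy)]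

lemma smashMap_id {y0 : Y} (f : Smash Y y0 A) : smashMap y0 y0 id A f = f :=
  Subtype.ext <| by
    rw [smashMap_coe, mapDomain_id, erase_of_notMem_support (notMem_support_iff.2 f.2)]

lemma Finsupp.mapDomain_apply_mem {B : AddSubgroup A} (g : Y → Z) (v : Y →₀ A) {z : Z}
    (hv : ∀ y, g y = z → v y ∈ B) : mapDomain g v z ∈ B := by
  classical
  rw [mapDomain, Finsupp.sum_apply]
  refine AddSubgroup.sum_mem _ fun y _ => ?_
  change single (g y) (v y) z ∈ B
  rw [single_apply]
  split_ifs with hyz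
  · exact hv y hyz
  · exact zero_mem B

lemma smashMap_apply_mem {B : AddSubgroup A} {y0 : Y} {z0 : Z} (g : Y → Z)
    (f : Smash Y y0 A) (hf : ∀ y, (f : Y →₀ A) y ∈ B) (z : Z) :
    (smashMap y0 z0 g A f : Z →₀ A) z ∈ B := by
  by_cases hz : z = z0
  · rw [hz, (smashMap y0 z0 g A f).2]
    exact zero_mem B
  · rw [smashMap_apply_of_ne g f hz]
    exact mapDomain_apply_mem g _ fun y _ => hf y

lemma smashMap_apply_sub_mem {B : AddSubgroup A} {y0 : Y} {z0 : Z} (g : Y → Z)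
    (f : Smash Y y0 A) {a : Y} {z : Z} (hz : z ≠ z0) (ha : g a = z)
    (hf : ∀ y, y ≠ a → g y = z → (f : Y →₀ A) y ∈ B) :
    (smashMap y0 z0 g A f : Z →₀ A) z - (f : Y →₀ A) a ∈ B := by
  classical
  have hsplit :
      mapDomain g (f : Y →₀ A) = single z ((f : Y →₀ A) a) + mapDomain g (erase a f) := by
    rw [← ha, ← mapDomain_single, ← mapDomain_add, single_add_erase]
  rw [smashMap_apply_of_ne g f hz, hsplit, Finsupp.add_apply, single_eq_same,
    add_sub_cancel_left]
  refine mapDomain_apply_mem g _ fun y hy => ?_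
  by_cases hya : y = a
  · rw [hya, erase_same]
    exact zero_mem B
  · rw [erase_ne hya]
    exact hf y hya hy

lemma Smash.exists_nsmul_eq {y0 : Y} {m : ℕ} (v : Smash Y y0 A)
    (hv : ∀ y, (v : Y →₀ A) y ∈ (nsmulAddMonoidHom m).range) :
    ∃ w : Smash Y y0 A, m • w = v ∧
      ∀ y, (w : Y →₀ A) y ≠ 0 → (v : Y →₀ A) y ≠ 0 := by
  classical
  choose q hq using fun y => AddMonoidHom.mem_range.1 (hv y)
  let w : Y →₀ A := onFinset (v : Y →₀ A).support
    (fun y => if (v : Y →₀ A) y = 0 then 0 else q y) fun y hy => by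
      rw [mem_support_iff]
      intro hvy
      exact hy (if_pos hvy)
  have hw : ∀ y, w y = if (v : Y →₀ A) y = 0 then 0 else q y := fun y => onFinset_apply
  refine ⟨⟨w, by rw [mem_smash, hw, if_pos (mem_smash.1 v.2)]⟩,
    Subtype.ext <| Finsupp.ext fun y => ?_, ?_⟩
  · rw [AddSubgroup.coe_nsmul, Finsupp.smul_apply, hw]
    split_ifs with hvy
    · rw [smul_zero, hvy]
    · exact hq y
  · intro y hy hvy
    exact hy ((hw y).trans (if_pos hvy))

lemma exists_smashMap_eq_of_support_subset_image {y0 : Y} {z0 : Z} (g : Y → Z)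
    (hg : g y0 = z0) {V : Set Y} {U : Set Z} (hUV : U ⊆ g '' V) (τ : Smash Z z0 A)
    (hτ : ∀ z, (τ : Z →₀ A) z ≠ 0 → z ∈ U) {m : ℕ} (hmτ : m • τ = 0) :
    ∃ β : Smash Y y0 A, smashMap y0 z0 g A β = τ ∧ m • β = 0 ∧
      ∀ y, (β : Y →₀ A) y ≠ 0 → y ∈ V := by
  have : Nonempty Y := ⟨y0⟩
  have hUV' : ∀ z ∈ U, ∃ y ∈ V, g y = z := hUV
  choose! ψ hψV hψ using hUV'
  refine ⟨smashMap z0 y0 ψ A τ, ?_, by rw [← map_nsmul, hmτ, map_zero], fun y hy => ?_⟩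
  · rw [smashMap_comp _ _ _ _ _ hg,
      smashMap_congr (g := g ∘ ψ) (g' := id) τ fun z hz => hψ z (hτ z hz),
      smashMap_id]
  · obtain ⟨z, hz, rfl⟩ := exists_ne_zero_of_smashMap_apply_ne_zero ψ τ hy
    exact hψV z (hτ z hz)

end Smash

section Tower

variable (F : ℕᵒᵖ ⥤ Pointed.{w}) {A : Type*} [AddCommGroup A]

abbrev towerMap {n N : ℕ} (h : n ≤ N) : (F.obj (op N)).X → (F.obj (op n)).X :=
  (F.map (homOfLE h).op).toFun

lemma towerMap_point {n N : ℕ} (h : n ≤ N) :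
    towerMap F h (F.obj (op N)).point = (F.obj (op n)).point :=
  (F.map (homOfLE h).op).map_point

lemma towerMap_self {n : ℕ} (h : n ≤ n) : towerMap F h = id := by
  rw [towerMap, show homOfLE h = 𝟙 n from rfl, op_id, F.map_id]
  rfl

lemma towerMap_comp {n k N : ℕ} (h₁ : n ≤ k) (h₂ : k ≤ N) :
    towerMap F h₁ ∘ towerMap F h₂ = towerMap F (h₁.trans h₂) := by
  rw [towerMap, towerMap, towerMap, ← homOfLE_comp h₁ h₂, op_comp, F.map_comp]
  rfl

lemma plim_towerMap (x : plim F) {n N : ℕ} (h : n ≤ N) :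
    towerMap F h (x.1 (op N)) = x.1 (op n) :=
  x.2 (homOfLE h).op

lemma glim_smashMap_towerMap (g : glim F A) {n N : ℕ} (h : n ≤ N) :
    smashMap _ _ (towerMap F h) A (g.1 (op N)) = g.1 (op n) :=
  g.2 (homOfLE h).op

lemma glim_sub_apply (g g' : glim F A) (n : ℕ) (a : (F.obj (op n)).X) :
    ((g - g').1 (op n) : _ →₀ A) a =
      (g.1 (op n) : _ →₀ A) a - (g'.1 (op n) : _ →₀ A) a :=
  rfl

lemma rho_apply (f : Smash (plim F) (plimPt F) A) (n : ℕ) :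
    (rho F A f).1 (op n) = smashMap _ _ (fun x : plim F => x.1 (op n)) A f :=
  rfl

lemma mem_glim_of_succ (e : ∀ n : ℕ, Smash (F.obj (op n)).X (F.obj (op n)).point A)
    (he : ∀ n, smashMap _ _ (towerMap F n.le_succ) A (e (n + 1)) = e n) :
    (fun d : ℕᵒᵖ => e d.unop) ∈ glim F A := by
  have key : ∀ n N (h : n ≤ N), smashMap _ _ (towerMap F h) A (e N) = e n := by
    intro n N h
    induction N, h using Nat.le_induction with
    | base => rw [towerMap_self, smashMap_id]
    | succ N h ih =>
      rw [← towerMap_comp F h N.le_succ, ← smashMap_comp _ _ _ _ _ (towerMap_point F h), he, ih]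
  intro d d' u
  have hu : u = (homOfLE (leOfHom u.unop)).op := Quiver.Hom.unop_inj (Subsingleton.elim _ _)
  rw [hu]
  exact key _ _ _

lemma plim_eventually_ne {x y : plim F} (hxy : x ≠ y) :
    ∀ᶠ K in atTop, x.1 (op K) ≠ y.1 (op K) := by
  obtain ⟨n, hn⟩ : ∃ n, x.1 (op n) ≠ y.1 (op n) := by
    by_contra! h
    exact hxy (Subtype.ext (funext fun d => h d.unop))
  refine eventually_atTop.2 ⟨n, fun K hK hK' => hn ?_⟩
  rw [← plim_towerMap F x hK, ← plim_towerMap F y hK, hK']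

lemma plim_eventually_injOn {S : Set (plim F)} (hS : S.Finite) :
    ∀ᶠ K in atTop, S.InjOn fun x => x.1 (op K) := by
  have hpairs := (hS.prod hS).eventually_all.2 fun p _ =>
    (em (p.1 = p.2)).elim (fun h => Eventually.of_forall fun _ _ => h)
      fun h => (plim_eventually_ne F h).mono fun _ hK hK' => absurd hK' hK
  exact hpairs.mono fun K hK x hx y hy => hK (x, y) ⟨hx, hy⟩

end Tower

lemma exists_seq_of_exists_succ {α : ℕ → Sort*} (P : ∀ n, α n → Prop)
    (R : ∀ n, α (n + 1) → α n → Prop) (h0 : ∃ a, P 0 a)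
    (hsucc : ∀ n a, P n a → ∃ b, P (n + 1) b ∧ R n b a) :
    ∃ e : ∀ n, α n, (∀ n, P n (e n)) ∧ ∀ n, R n (e (n + 1)) (e n) := by
  choose a₀ ha₀ using h0
  choose next hnextP hnextR using hsucc
  let e : ∀ n, {a : α n // P n a} := fun n =>
    Nat.rec ⟨a₀, ha₀⟩ (fun k a => ⟨next k a.1 a.2, hnextP k a.1 a.2⟩) n
  exact ⟨fun n => (e n).1, fun n => (e n).2, fun n => hnextR n (e n).1 (e n).2⟩

section GlimDivision

variable {F : ℕᵒᵖ ⥤ Pointed.{w}} {A : Type*} [AddCommGroup A]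

def supportImages (g : glim F A) (n : ℕ) : Set (F.obj (op n)).X :=
  {a | ∃ N, ∃ h : n ≤ N, ∃ c, (g.1 (op N) : _ →₀ A) c ≠ 0 ∧ towerMap F h c = a}

lemma mem_supportImages_of_ne_zero (g : glim F A) {n : ℕ} {c : (F.obj (op n)).X}
    (hc : (g.1 (op n) : _ →₀ A) c ≠ 0) : c ∈ supportImages g n :=
  ⟨n, le_rfl, c, hc, by rw [towerMap_self, id]⟩

lemma towerMap_mem_supportImages (g : glim F A) {n : ℕ} {b : (F.obj (op (n + 1))).X}
    (hb : b ∈ supportImages g (n + 1)) : towerMap F n.le_succ b ∈ supportImages g n := by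
  obtain ⟨N, h, c, hc, rfl⟩ := hb
  exact ⟨N, n.le_succ.trans h, c, hc, (congrFun (towerMap_comp F n.le_succ h) c).symm⟩

lemma supportImages_subset_image (g : glim F A) (n : ℕ) :
    supportImages g n ⊆ towerMap F n.le_succ '' supportImages g (n + 1) := by
  rintro a ⟨N, h, c, hc, rfl⟩
  rcases h.lt_or_eq with h' | rfl
  · exact ⟨towerMap F h' c, ⟨N, h', c, hc, rfl⟩, congrFun (towerMap_comp F n.le_succ h') c⟩
  · rw [← glim_smashMap_towerMap F g n.le_succ] at hc
    obtain ⟨y, hy, hyc⟩ := exists_ne_zero_of_smashMap_apply_ne_zero _ _ hc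
    exact ⟨y, mem_supportImages_of_ne_zero g hy, by rw [hyc, towerMap_self, id]⟩

lemma exists_succ_nsmul_eq (g : glim F A) {m : ℕ}
    (hg : ∀ (n : ℕ) (a : (F.obj (op n)).X),
      (g.1 (op n) : _ →₀ A) a ∈ (nsmulAddMonoidHom m).range) {n : ℕ}
    (w : Smash (F.obj (op n)).X (F.obj (op n)).point A) (hw : m • w = g.1 (op n))
    (hwU : ∀ a, (w : _ →₀ A) a ≠ 0 → a ∈ supportImages g n) :
    ∃ w' : Smash (F.obj (op (n + 1))).X (F.obj (op (n + 1))).point A,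
      (m • w' = g.1 (op (n + 1)) ∧
        ∀ a, (w' : _ →₀ A) a ≠ 0 → a ∈ supportImages g (n + 1)) ∧
      smashMap _ _ (towerMap F n.le_succ) A w' = w := by
  obtain ⟨ε, hε, hεU⟩ := Smash.exists_nsmul_eq (g.1 (op (n + 1))) (hg (n + 1))
  set π := smashMap _ _ (towerMap F n.le_succ) A
  have hτ : m • (w - π ε) = 0 := by
    rw [smul_sub, hw, ← map_nsmul, hε, glim_smashMap_towerMap, sub_self]
  have hτU :
      ∀ a, ((w - π ε : Smash _ _ A) : _ →₀ A) a ≠ 0 → a ∈ supportImages g n := by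
    intro a ha
    by_cases hwa : (w : _ →₀ A) a = 0
    · have hπa : (π ε : _ →₀ A) a ≠ 0 := fun hπa =>
        ha (by rw [AddSubgroup.coe_sub, Finsupp.sub_apply, hwa, hπa, sub_zero])
      obtain ⟨b, hb, rfl⟩ := exists_ne_zero_of_smashMap_apply_ne_zero _ _ hπa
      exact towerMap_mem_supportImages g (mem_supportImages_of_ne_zero g (hεU b hb))
    · exact hwU a hwa
  obtain ⟨β, hβ, hmβ, hβU⟩ := exists_smashMap_eq_of_support_subset_image _
    (towerMap_point F _) (supportImages_subset_image g n) _ hτU hτ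
  refine ⟨ε + β, ⟨by rw [smul_add, hε, hmβ, add_zero], fun a ha => ?_⟩,
    by rw [map_add, hβ, add_sub_cancel]⟩
  by_cases hεa : (ε : _ →₀ A) a = 0
  · refine hβU a fun hβa => ha ?_
    rw [AddSubgroup.coe_add, Finsupp.add_apply, hεa, hβa, add_zero]
  · exact mem_supportImages_of_ne_zero g (hεU a hεa)

lemma glim_exists_nsmul_eq (g : glim F A) {m : ℕ}
    (hg : ∀ (n : ℕ) (a : (F.obj (op n)).X),
      (g.1 (op n) : _ →₀ A) a ∈ (nsmulAddMonoidHom m).range) :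
    ∃ g' : glim F A, m • g' = g := by
  obtain ⟨w₀, hw₀, hw₀U⟩ := Smash.exists_nsmul_eq (g.1 (op 0)) (hg 0)
  obtain ⟨e, he, hsucc⟩ := exists_seq_of_exists_succ
    (fun n (w : Smash (F.obj (op n)).X (F.obj (op n)).point A) =>
      m • w = g.1 (op n) ∧ ∀ a, (w : _ →₀ A) a ≠ 0 → a ∈ supportImages g n)
    (fun n w' w => smashMap _ _ (towerMap F n.le_succ) A w' = w)
    ⟨w₀, hw₀, fun a ha => mem_supportImages_of_ne_zero g (hw₀U a ha)⟩
    fun n w hw => exists_succ_nsmul_eq g hg w hw.1 hw.2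
  refine ⟨⟨fun d => e d.unop, mem_glim_of_succ F e hsucc⟩, Subtype.ext (funext fun d => ?_)⟩
  rw [AddSubgroup.coe_nsmul]
  exact (he d.unop).1

end GlimDivision

section Correction

variable {F : ℕᵒᵖ ⥤ Pointed.{w}} {A : Type*} [AddCommGroup A] {B : AddSubgroup A}

lemma glim_apply_sub_succ_mem (h : glim F A) {S : Finset (plim F)}
    (hS : ∀ (n : ℕ) (a : (F.obj (op n)).X), (∀ s ∈ S, a ≠ s.1 (op n)) →
      (h.1 (op n) : _ →₀ A) a ∈ B)
    {K : ℕ} (hinj : (insert (plimPt F) (S : Set (plim F))).InjOn fun x => x.1 (op K))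
    {t : plim F} (ht : t ∈ S) (htpt : t ≠ plimPt F) :
    (h.1 (op K) : _ →₀ A) (t.1 (op K)) -
      (h.1 (op (K + 1)) : _ →₀ A) (t.1 (op (K + 1))) ∈ B := by
  rw [← glim_smashMap_towerMap F h K.le_succ]
  refine smashMap_apply_sub_mem _ _ (fun htK => htpt ?_) (plim_towerMap F t _)
    fun y hy hyt => hS _ y ?_
  · exact hinj (Set.mem_insert_of_mem _ ht) (Set.mem_insert _ _) htK
  · rintro s hs rfl
    have hst : s = t :=
      hinj (Set.mem_insert_of_mem _ hs) (Set.mem_insert_of_mem _ ht)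
        ((plim_towerMap F s K.le_succ).symm.trans hyt)
    exact hy (by rw [hst])

lemma glim_apply_sub_mem (h : glim F A) {S : Finset (plim F)}
    (hS : ∀ (n : ℕ) (a : (F.obj (op n)).X), (∀ s ∈ S, a ≠ s.1 (op n)) →
      (h.1 (op n) : _ →₀ A) a ∈ B)
    {N : ℕ} (hinj : ∀ K ≥ N, (insert (plimPt F) (S : Set (plim F))).InjOn fun x => x.1 (op K))
    {t : plim F} (ht : t ∈ S) (htpt : t ≠ plimPt F) {K : ℕ} (hK : N ≤ K) :
    (h.1 (op K) : _ →₀ A) (t.1 (op K)) - (h.1 (op N) : _ →₀ A) (t.1 (op N)) ∈ B := by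
  induction K, hK using Nat.le_induction with
  | base => simpa only [sub_self] using zero_mem B
  | succ K hK ih =>
    have hstep := B.sub_mem ih (glim_apply_sub_succ_mem h hS (hinj K hK) ht htpt)
    rwa [sub_sub_sub_cancel_left] at hstep

noncomputable def threadValues (h : glim F A) (S : Finset (plim F)) (N : ℕ) :
    Smash (plim F) (plimPt F) A :=
  ⟨indicator S fun s _ => (h.1 (op N) : _ →₀ A) (s.1 (op N)), by
    classical
    rw [mem_smash, indicator_apply]
    split_ifs
    exacts [(h.1 (op N)).2, rfl]⟩

lemma threadValues_coe (h : glim F A) (S : Finset (plim F)) (N : ℕ) :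
    (threadValues h S N : plim F →₀ A) =
      indicator S fun s _ => (h.1 (op N) : _ →₀ A) (s.1 (op N)) :=
  rfl

lemma rho_threadValues_apply (h : glim F A) {S : Finset (plim F)} {N K : ℕ}
    (hinj : (insert (plimPt F) (S : Set (plim F))).InjOn fun x => x.1 (op K))
    {t : plim F} (ht : t ∈ S) (htK : t.1 (op K) ≠ (F.obj (op K)).point) :
    ((rho F A (threadValues h S N)).1 (op K) : _ →₀ A) (t.1 (op K)) =
      (h.1 (op N) : _ →₀ A) (t.1 (op N)) := by
  classical
  rw [rho_apply, smashMap_apply_of_ne _ _ htK]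
  refine (mapDomain_apply' _ _ ?_ hinj (Set.mem_insert_of_mem _ ht)).trans ?_
  · exact (Finset.coe_subset.2 (support_indicator_subset _ _)).trans (Set.subset_insert _ _)
  · rw [threadValues_coe, indicator_apply, dif_pos ht]

lemma rho_threadValues_apply_eq_zero (h : glim F A) {S : Finset (plim F)} {N K : ℕ}
    {a : (F.obj (op K)).X} (ha : ∀ t ∈ S, t.1 (op K) ≠ a) :
    ((rho F A (threadValues h S N)).1 (op K) : _ →₀ A) a = 0 := by
  by_contra hne
  rw [rho_apply] at hne
  obtain ⟨t, ht, rfl⟩ := exists_ne_zero_of_smashMap_apply_ne_zero _ _ hne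
  rw [threadValues_coe] at ht
  exact ha t (support_indicator_subset _ _ (mem_support_iff.2 ht)) rfl

theorem exists_forall_glim_sub_rho_mem (h : glim F A) (S : Finset (plim F))
    (hS : ∀ (n : ℕ) (a : (F.obj (op n)).X), (∀ s ∈ S, a ≠ s.1 (op n)) →
      (h.1 (op n) : _ →₀ A) a ∈ B) :
    ∃ f, ∀ (n : ℕ) (a : (F.obj (op n)).X),
      ((h - rho F A f).1 (op n) : _ →₀ A) a ∈ B := by
  obtain ⟨N, hN⟩ := eventually_atTop.1
    (plim_eventually_injOn F (S.finite_toSet.insert (plimPt F)))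
  have hlarge : ∀ K, N ≤ K → ∀ a : (F.obj (op K)).X,
      ((h - rho F A (threadValues h S N)).1 (op K) : _ →₀ A) a ∈ B := by
    intro K hK a
    rw [glim_sub_apply]
    by_cases ha : ∃ t ∈ S, t.1 (op K) = a
    · obtain ⟨t, ht, rfl⟩ := ha
      by_cases htK : t.1 (op K) = (F.obj (op K)).point
      · rw [htK, (h.1 _).2, ((rho F A _).1 _).2, sub_zero]
        exact zero_mem B
      · have htpt : t ≠ plimPt F := fun htpt => htK (by rw [htpt]; rfl)
        rw [rho_threadValues_apply h (hN K hK) ht htK]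
        exact glim_apply_sub_mem h hS hN ht htpt hK
    · rw [rho_threadValues_apply_eq_zero h fun t ht hta => ha ⟨t, ht, hta⟩, sub_zero]
      exact hS K a fun s hs hsa => ha ⟨s, hs, hsa.symm⟩
  refine ⟨threadValues h S N, fun n a => ?_⟩
  rcases le_total N n with hn | hn
  · exact hlarge n hn a
  · rw [← glim_smashMap_towerMap F _ hn]
    exact smashMap_apply_mem _ _ (hlarge N le_rfl) a

end Correction

theorem stmt15_general (F : ℕᵒᵖ ⥤ Pointed.{w}) {A : Type*} [AddCommGroup A]
    (m : ℕ) (h : glim F A) (l : ℕ) (x : Fin l → plim F)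
    (hdiv : ∀ (n : ℕ) (a : (F.obj (Opposite.op n)).X),
      (h.1 (Opposite.op n)).1 a ≠ 0 → (∀ i : Fin l, a ≠ (x i).1 (Opposite.op n)) →
        ∃ b : A, (h.1 (Opposite.op n)).1 a = m • b) :
    ∃ g : glim F A, (h : ↥(glim F A)) - m • g ∈ (rho F A).range := by
  classical
  obtain ⟨f, hf⟩ := exists_forall_glim_sub_rho_mem (B := (nsmulAddMonoidHom m).range) h
    (Finset.univ.image x) fun n a ha => by
      by_cases h0 : (h.1 (op n) : _ →₀ A) a = 0
      · rw [h0]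
        exact zero_mem _
      · obtain ⟨b, hb⟩ :=
          hdiv n a h0 fun i => ha (x i) (Finset.mem_image_of_mem x (Finset.mem_univ i))
        exact ⟨b, hb.symm⟩
  obtain ⟨g, hg⟩ := glim_exists_nsmul_eq _ hf
  exact ⟨g, f, by rw [hg, sub_sub_cancel]⟩

/-- Let `A` be an abelian group, `F : ℕᵒᵖ ⥤ Set_*` a tower of pointed sets, `m ≥ 2`,
`h ∈ lim_ℕ(X∧A)` and `x₁, …, x_l ∈ lim_ℕ X`.  Suppose that for every `n ∈ ℕ` and
every `a ∈ X(n)` with `h(n)_a ≠ 0` and `a ∉ {x₁(n), …, x_l(n)}`, the element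
`h(n)_a` is divisible by `m` in `A`.  Then the class `[h]` in `H(X,A)` is divisible
by `m`: there is `g ∈ lim_ℕ(X∧A)` with `h - m • g` in the image of `ρ`. -/
theorem stmt15 (F : ℕᵒᵖ ⥤ Pointed.{w}) {A : Type*} [AddCommGroup A]
    (m : ℕ) (hm : 2 ≤ m) (h : glim F A) (l : ℕ) (x : Fin l → plim F)
    (hdiv : ∀ (n : ℕ) (a : (F.obj (Opposite.op n)).X),
      (h.1 (Opposite.op n)).1 a ≠ 0 → (∀ i : Fin l, a ≠ (x i).1 (Opposite.op n)) →
        ∃ b : A, (h.1 (Opposite.op n)).1 a = m • b) :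
    ∃ g : glim F A, (h : ↥(glim F A)) - m • g ∈ (rho F A).range :=
  stmt15_general F m h l x hdiv
end

section
/- Let A be an abelian group that is not cotorsion and let λ be a cardinal with λ > ℵ₀. Then there exists a directed poset 𝒯 with |𝒯| = λ and a diagram X : 𝒯 → Set_* of finite pointed sets such that the cokernel H(X,A) of the natural map ρ is not cotorsion. Concretely, one may take 𝒯 to be the poset of finite nonempty subsets of λ ordered by inclusion, and X(s) = s₊ (the set s with a disjoint basepoint), the map X(t) → X(s) for s ⊆ t being the identity on s and the basepoint elsewhere; then H(X,A) ≅ (∏_{α<λ} A)/(⊕_{α<λ} A), and this group is not cotorsion. -/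
open CategoryTheory Finsupp

universe u v w

/-- `C` is cotorsion, i.e. `Ext¹_ℤ(ℚ, C) = 0`.  Applying `Hom(-, C)` to the standard
free presentation `0 → ⊕_{n ∈ ℕ} ℤ → ⊕_{n ∈ ℕ} ℤ → ℚ → 0` (where the first map sends
`e_n ↦ e_n - (n+1)·e_{n+1}`) identifies `Ext¹_ℤ(ℚ, C)` with the cokernel of
`C^ℕ → C^ℕ, (x_n) ↦ (x_n - (n+1)x_{n+1})`; hence `Ext¹_ℤ(ℚ, C) = 0` iff every system
of equations `x_n - (n+1)·x_{n+1} = a_n` (`n ∈ ℕ`) is solvable in `C`. -/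
def Cotorsion (C : Type*) [AddCommGroup C] : Prop :=
  ∀ a : ℕ → C, ∃ x : ℕ → C, ∀ n : ℕ, x n - (n + 1) • x (n + 1) = a n
/-- A diagram of pointed sets indexed by a (nonempty) directed poset `T`, i.e. a
functor `Tᵒᵖ ⥤ Set_*` (with structure maps `X(t) → X(s)` for `t ≥ s`). -/
structure DirectedDiagram : Type (u + 1) where
  T : Type u
  [po : PartialOrder T]
  [dir : IsDirected T (· ≤ ·)]
  [ne : Nonempty T]
  F : Tᵒᵖ ⥤ Pointed.{u}

attribute [instance] DirectedDiagram.po DirectedDiagram.dir DirectedDiagram.ne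

/-! Take `𝒯` the finite subsets of a set `ι` of cardinality `λ` and `X(s) = s₊`. Evaluating a
compatible family at the singletons `{i}` maps `lim (X ∧ A)` onto `A^ι`, and sends the image of `ρ`
into `A^(ι)`, because a point of `lim X` equals `i` on `{i}` for at most one `i`. So `H(X,A)`
surjects onto `A^ι / A^(ι)`, and quotients of cotorsion groups are cotorsion.

`A^ι / A^(ι)` is not cotorsion: a solution there of `x n - (n+1) x (n+1) = a n`, `a` constant in
`ι`, lifts to `A^ι` up to countably many finitely supported errors; at a coordinate outside all
their supports, which exists since `ι` is uncountable, the lift solves the system in `A`. -/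

theorem Cotorsion.of_surjective {C C' : Type*} [AddCommGroup C] [AddCommGroup C'] (φ : C →+ C')
    (hφ : Function.Surjective φ) (hC : Cotorsion C) : Cotorsion C' := by
  intro a
  choose b hb using fun n => hφ (a n)
  obtain ⟨x, hx⟩ := hC b
  exact ⟨fun n => φ (x n), fun n => by rw [← map_nsmul, ← map_sub, hx, hb]⟩

theorem Finsupp.exists_forall_apply_eq_zero {ι M : Type*} [Zero M] [Uncountable ι]
    (g : ℕ → ι →₀ M) : ∃ i, ∀ n, g n i = 0 := by
  have hcount : (⋃ n, ((g n).support : Set ι)).Countable :=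
    Set.countable_iUnion fun n => (g n).support.finite_toSet.countable
  obtain ⟨i, hi⟩ : ∃ i, i ∉ ⋃ n, ((g n).support : Set ι) :=
    (Set.ne_univ_iff_exists_notMem _).mp fun h => Set.not_countable_univ (h ▸ hcount)
  simp only [Set.mem_iUnion, Finset.mem_coe, Finsupp.mem_support_iff, not_exists, not_not] at hi
  exact ⟨i, hi⟩

theorem not_cotorsion_pi_quotient_finsupp {A : Type*} [AddCommGroup A] (hA : ¬ Cotorsion A)
    (ι : Type*) [Uncountable ι] :
    ¬ Cotorsion ((ι → A) ⧸ (Finsupp.coeFnAddHom (ι := ι) (M := A)).range) := by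
  intro hC
  apply hA
  intro a
  set H := (Finsupp.coeFnAddHom (ι := ι) (M := A)).range
  obtain ⟨x, hx⟩ := hC fun n => QuotientAddGroup.mk (fun _ => a n)
  choose y hy using fun n => QuotientAddGroup.mk_surjective (s := H) (x n)
  have hdefect : ∀ n, ∃ g : ι →₀ A, ⇑g = y n - (n + 1) • y (n + 1) - fun _ => a n := by
    intro n
    change _ ∈ H
    rw [← QuotientAddGroup.eq_zero_iff]
    simp [hy, hx n]
  choose g hg using hdefect
  obtain ⟨i, hi⟩ := Finsupp.exists_forall_apply_eq_zero g
  refine ⟨fun n => y n i, fun n => ?_⟩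
  have hcoord := congrFun (hg n) i
  rw [hi n, Pi.sub_apply, Pi.sub_apply, Pi.smul_apply, eq_comm, sub_eq_zero] at hcoord
  exact hcoord

section SmashMap

variable {Y : Type u} {Z : Type v} (y0 : Y) (z0 : Z) (g : Y → Z) {A : Type w} [AddCommGroup A]
  (f : Smash Y y0 A)

theorem exists_mem_support_of_smashMap_apply_ne_zero {z : Z}
    (h : (smashMap y0 z0 g A f : Z →₀ A) z ≠ 0) : ∃ a ∈ (f : Y →₀ A).support, g a = z := by
  classical
  have hz : z ∈ ((Finsupp.mapDomain g (f : Y →₀ A)).erase z0).support :=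
    Finsupp.mem_support_iff.mpr h
  rw [Finsupp.support_erase] at hz
  simpa using Finsupp.mapDomain_support (Finset.mem_of_mem_erase hz)

theorem smashMap_apply_of_fiber_eq {z : Z} (hz : z ≠ z0) {a₀ : Y}
    (hfiber : ∀ a, g a = z ↔ a = a₀) :
    (smashMap y0 z0 g A f : Z →₀ A) z = (f : Y →₀ A) a₀ := by
  classical
  obtain rfl : g a₀ = z := (hfiber a₀).mpr rfl
  change ((Finsupp.mapDomain g (f : Y →₀ A)).erase z0) (g a₀) = _
  rw [Finsupp.erase_ne hz, Finsupp.mapDomain_apply_eq_sum, Finset.sum_filter]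
  simp only [hfiber, Finset.sum_ite_eq', Finsupp.mem_support_iff, ite_not]
  exact ite_eq_right_iff.mpr Eq.symm

end SmashMap

section FinsetDiagram

open Opposite

variable {ι : Type} [DecidableEq ι]

def optionRestrict {s : Finset ι} (t : Finset ι) (o : Option s) : Option t :=
  o.bind fun x => if hx : x.1 ∈ t then some ⟨x, hx⟩ else none

theorem optionRestrict_eq_some_iff {s t : Finset ι} (h : t ⊆ s) {o : Option s} {y : t} :
    optionRestrict t o = some y ↔ o = some ⟨y, h y.2⟩ := by
  cases o with
  | none => simp [optionRestrict]
  | some x =>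
    by_cases hx : x.1 ∈ t
    · simp [optionRestrict, hx, Subtype.ext_iff]
    · simp only [optionRestrict, Option.bind_some, hx, dite_false, reduceCtorEq, false_iff,
        Option.some_inj, Subtype.ext_iff]
      exact fun e => hx (e ▸ y.2)

variable (ι) in
/-- The diagram `s ↦ s₊`, with `none` as the added basepoint. -/
def finsetDiagram : (Finset ι)ᵒᵖ ⥤ Pointed.{0} where
  obj s := ⟨Option s.unop, none⟩
  map {_ t} _ := ⟨optionRestrict t.unop, rfl⟩
  map_id s := Pointed.Hom.ext <| funext fun o => by cases o <;> simp [optionRestrict]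
  map_comp {_ Y Z} u v := Pointed.Hom.ext <| funext fun o => by
    cases o with
    | none => rfl
    | some x =>
      by_cases hz : x.1 ∈ unop Z
      · simp [optionRestrict, hz, leOfHom v.unop hz]
      · by_cases hy : x.1 ∈ unop Y <;> simp [optionRestrict, hy, hz]

instance (s : (Finset ι)ᵒᵖ) : Finite ((finsetDiagram ι).obj s).X :=
  inferInstanceAs (Finite (Option s.unop))

theorem finsetDiagram_map_eq_some_iff {s t : (Finset ι)ᵒᵖ} (u : s ⟶ t) {o : Option s.unop}
    {y : t.unop} :
    ((finsetDiagram ι).map u).toFun o = some y ↔ o = some ⟨y, leOfHom u.unop y.2⟩ :=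
  optionRestrict_eq_some_iff (leOfHom u.unop)

variable (A : Type*) [AddCommGroup A]

noncomputable def glimOfFun (v : ι → A) : glim (finsetDiagram ι) A :=
  ⟨fun s => ⟨Finsupp.equivFunOnFinite.symm fun o => o.elim 0 fun x => v x, rfl⟩,
    fun _ _ u => by
      ext z
      cases z with
      | none => exact (smashMap _ _ _ A _).2
      | some y =>
        exact smashMap_apply_of_fiber_eq _ _ _ _ (Option.some_ne_none y)
          fun a => finsetDiagram_map_eq_some_iff u⟩

def evalSingletons : glim (finsetDiagram ι) A →+ (ι → A) where
  toFun h i := (h.1 (op {i})).1 (some ⟨i, Finset.mem_singleton_self i⟩)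
  map_zero' := rfl
  map_add' _ _ := rfl

theorem evalSingletons_surjective : Function.Surjective (evalSingletons (ι := ι) A) :=
  fun v => ⟨glimOfFun A v, rfl⟩

theorem subsingleton_setOf_eval_singleton_eq (x : plim (finsetDiagram ι)) :
    {i | x.1 (op {i}) = some ⟨i, Finset.mem_singleton_self i⟩}.Subsingleton := by
  intro i hi j hj
  have key : ∀ k (hk : k ∈ ({i, j} : Finset ι)),
      x.1 (op {k}) = some ⟨k, Finset.mem_singleton_self k⟩ → x.1 (op {i, j}) = some ⟨k, hk⟩ := by
    intro k hk hxk
    have hsub : ({k} : Finset ι) ⊆ {i, j} := Finset.singleton_subset_iff.mpr hk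
    rw [← x.2 (homOfLE hsub).op] at hxk
    exact (finsetDiagram_map_eq_some_iff _).mp hxk
  exact congrArg Subtype.val
    (Option.some_injective _ ((key i (by simp) hi).symm.trans (key j (by simp) hj)))

theorem evalSingletons_rho_mem_range (f : Smash (plim (finsetDiagram ι)) (plimPt _) A) :
    evalSingletons A (rho _ A f) ∈ (Finsupp.coeFnAddHom (ι := ι) (M := A)).range := by
  set w := evalSingletons A (rho _ A f)
  have hsupport : Function.support w ⊆ ⋃ x ∈ (f : plim (finsetDiagram ι) →₀ A).support,
      {i | x.1 (op {i}) = some ⟨i, Finset.mem_singleton_self i⟩} := by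
    intro i hi
    obtain ⟨x, hx, hxi⟩ := exists_mem_support_of_smashMap_apply_ne_zero _ _ _ f hi
    exact Set.mem_biUnion hx hxi
  have hfinite : (Function.support w).Finite :=
    (f.1.support.finite_toSet.biUnion fun x _ =>
      (subsingleton_setOf_eval_singleton_eq x).finite).subset hsupport
  exact ⟨Finsupp.ofSupportFinite w hfinite, rfl⟩

end FinsetDiagram

theorem exists_surjective_coker_rho_finsetDiagram {ι : Type} [DecidableEq ι] (A : Type*)
    [AddCommGroup A] :
    ∃ ψ : glim (finsetDiagram ι) A ⧸ (rho _ A).range →+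
      (ι → A) ⧸ (Finsupp.coeFnAddHom (ι := ι) (M := A)).range, Function.Surjective ψ :=
  ⟨QuotientAddGroup.map _ _ (evalSingletons A)
      (by rintro _ ⟨f, rfl⟩; exact evalSingletons_rho_mem_range A f),
    QuotientAddGroup.map_surjective_of_surjective _ _ _
      (QuotientAddGroup.mk_surjective.comp (evalSingletons_surjective A)) _⟩

/-- Let `A` be an abelian group that is not cotorsion and let `λ > ℵ₀` be a cardinal.
Then there exist a directed poset `T` with `|T| = λ` and a diagram `X : Tᵒᵖ ⥤ Set_*`
of *finite* pointed sets such that the cokernel `H(X,A)` of the natural map `ρ` is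
not cotorsion.  Moreover (taking `T` to be the finite nonempty subsets of `λ` and
`X(s) = s₊`, one gets `H(X,A) ≅ (∏_{α<λ} A)/(⊕_{α<λ} A)`): for every index type `ι`
of cardinality `λ`, the group `(∏_{α ∈ ι} A)/(⊕_{α ∈ ι} A)` is not cotorsion. -/
theorem stmt19 {A : Type} [AddCommGroup A] (hA : ¬ Cotorsion A)
    (lam : Cardinal.{0}) (hlam : Cardinal.aleph0 < lam) :
    (∃ X : DirectedDiagram.{0},
        Cardinal.mk X.T = lam ∧
        (∀ d : (X.T)ᵒᵖ, Finite (X.F.obj d).X) ∧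
        ¬ Cotorsion (↥(glim X.F A) ⧸ (rho X.F A).range)) ∧
    (∀ ι : Type, Cardinal.mk ι = lam →
      ¬ Cotorsion ((ι → A) ⧸ (Finsupp.coeFnAddHom (ι := ι) (M := A)).range)) := by
  have huncountable : ∀ ι : Type, Cardinal.mk ι = lam → Uncountable ι :=
    fun ι hι => Cardinal.aleph0_lt_mk_iff.mp (hι ▸ hlam)
  refine ⟨?_, fun ι hι => have := huncountable ι hι; not_cotorsion_pi_quotient_finsupp hA ι⟩
  classical
  obtain ⟨ι, hι⟩ : ∃ ι : Type, Cardinal.mk ι = lam := ⟨lam.out, lam.mk_out⟩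
  have := huncountable ι hι
  obtain ⟨ψ, hψ⟩ := exists_surjective_coker_rho_finsetDiagram (ι := ι) A
  refine ⟨{ T := Finset ι, F := finsetDiagram ι }, ?_, fun s => inferInstance,
    fun hH => not_cotorsion_pi_quotient_finsupp hA ι (hH.of_surjective ψ hψ)⟩
  rw [← hι]
  exact Cardinal.mk_finset_of_infinite ι
end
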